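/- Let $W_L \in C^1(\mathbb{R}^d)$ be even with $\nabla W_L$ bounded, and suppose $x_i, v_i : [0,T] \to \mathbb{R}^d$, $i = 1,\dots,N$, are $C^1$ and satisfy $\dot x_i = v_i$, $\dot v_i = -(1-\alpha)(x_i - x_{d_i}) - \alpha(x_i - m(t)) - v_i + \frac{1}{N}\sum_j \nabla W_L(x_j - x_i)$, where $\alpha \in [0,1]$, $x_{d_i} \in \mathbb{R}^d$ are fixed, and $m : [0,T] \to \mathbb{R}^d$ is continuous with $|m(t)|^2 \le K$ for all $t$. Then there is a constant $C$, depending only on $T$, $K$, $\sup_i |x_{d_i}|$, $\|\nabla W_L\|_\infty$, $\inf W_L$, and the initial data, but not on $N$, such that $\frac{1}{N}\sum_{i=1}^N (|x_i(t)|^2 + |v_i(t)|^2) \le C$ for all $t \in [0,T]$. -/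

import Mathlib

open scoped RealInnerProductSpace
open Set

/-! The two confinement terms pull `x_i` towards `x_{d_i}` and `m(t)` with weights `1 - α` and `α`,
so the acceleration is `-x_i - v_i + c_i` with a forcing `c_i` bounded by
`max D √K + ‖∇W_L‖_∞` uniformly in `N` and `i`. For such a damped oscillator the cross terms
`⟨x, v⟩` cancel in `(‖x‖² + ‖v‖²)' = 2⟨v, c⟩ - 2‖v‖² ≤ ‖c‖² / 2`, so each particle's energy, and
hence the empirical mean, grows at most linearly in time. -/

section DampedOscillator

variable {E : Type*} [NormedAddCommGroup E] [InnerProductSpace ℝ E]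

theorem two_mul_inner_sub_two_mul_norm_sq_le (v c : E) :
    2 * ⟪v, c⟫ - 2 * ‖v‖ ^ 2 ≤ ‖c‖ ^ 2 / 2 := by
  nlinarith [real_inner_le_norm v c, sq_nonneg (2 * ‖v‖ - ‖c‖)]

theorem HasDerivAt.norm_sq_add_norm_sq_of_damped_oscillator {x v : ℝ → E} {c : E} {t : ℝ}
    (hx : HasDerivAt x (v t) t) (hv : HasDerivAt v (-x t - v t + c) t) :
    HasDerivAt (fun s ↦ ‖x s‖ ^ 2 + ‖v s‖ ^ 2) (2 * ⟪v t, c⟫ - 2 * ‖v t‖ ^ 2) t := by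
  refine (hx.norm_sq.add hv.norm_sq).congr_deriv ?_
  simp only [inner_add_right, inner_sub_right, inner_neg_right, real_inner_self_eq_norm_sq,
    real_inner_comm (x t)]
  ring

theorem norm_sq_add_norm_sq_le_of_damped_oscillator {x v c : ℝ → E} {T R : ℝ}
    (hx : ∀ t ∈ Icc 0 T, HasDerivAt x (v t) t)
    (hv : ∀ t ∈ Icc 0 T, HasDerivAt v (-x t - v t + c t) t)
    (hc : ∀ t ∈ Icc 0 T, ‖c t‖ ≤ R) {t : ℝ} (ht : t ∈ Icc 0 T) :
    ‖x t‖ ^ 2 + ‖v t‖ ^ 2 ≤ ‖x 0‖ ^ 2 + ‖v 0‖ ^ 2 + R ^ 2 / 2 * t := by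
  have hE : ∀ s ∈ Icc 0 T, HasDerivAt (fun s ↦ ‖x s‖ ^ 2 + ‖v s‖ ^ 2)
      (2 * ⟪v s, c s⟫ - 2 * ‖v s‖ ^ 2) s := fun s hs ↦
    (hx s hs).norm_sq_add_norm_sq_of_damped_oscillator (hv s hs)
  have hE' : ∀ s ∈ interior (Icc 0 T), deriv (fun s ↦ ‖x s‖ ^ 2 + ‖v s‖ ^ 2) s ≤ R ^ 2 / 2 := by
    intro s hs
    rw [(hE s (interior_subset hs)).deriv]
    have hcR : ‖c s‖ ^ 2 ≤ R ^ 2 := pow_le_pow_left₀ (norm_nonneg _) (hc s (interior_subset hs)) 2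
    linarith [two_mul_inner_sub_two_mul_norm_sq_le (v s) (c s)]
  have := (convex_Icc 0 T).image_sub_le_mul_sub_of_deriv_le
    (fun s hs ↦ (hE s hs).continuousAt.continuousWithinAt)
    (fun s hs ↦ (hE s (interior_subset hs)).differentiableAt.differentiableWithinAt)
    hE' 0 ⟨le_rfl, ht.1.trans ht.2⟩ t ht ht.1
  linarith

theorem norm_one_sub_smul_add_smul_add_le {α : ℝ} (hα : α ∈ Icc 0 1) {a b g : E} {A B G : ℝ}
    (ha : ‖a‖ ≤ A) (hb : ‖b‖ ≤ B) (hg : ‖g‖ ≤ G) :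
    ‖(1 - α) • a + α • b + g‖ ≤ max A B + G := by
  have hab : (1 - α) • a + α • b ∈ Metric.closedBall (0 : E) (max A B) :=
    convex_closedBall (0 : E) (max A B)
      (mem_closedBall_zero_iff.2 (ha.trans (le_max_left A B)))
      (mem_closedBall_zero_iff.2 (hb.trans (le_max_right A B)))
      (sub_nonneg.2 hα.2) hα.1 (sub_add_cancel 1 α)
  exact (norm_add_le _ _).trans (add_le_add (mem_closedBall_zero_iff.1 hab) hg)

theorem norm_inv_natCast_smul_sum_le {N : ℕ} (hN : 0 < N) {g : Fin N → E} {B : ℝ}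
    (hg : ∀ j, ‖g j‖ ≤ B) : ‖(N : ℝ)⁻¹ • ∑ j, g j‖ ≤ B := by
  have hsum : ‖∑ j, g j‖ ≤ N * B := by
    simpa using norm_sum_le_of_le Finset.univ fun j _ ↦ hg j
  calc ‖(N : ℝ)⁻¹ • ∑ j, g j‖ = (N : ℝ)⁻¹ * ‖∑ j, g j‖ := by
        rw [norm_smul, norm_inv, RCLike.norm_natCast]
    _ ≤ (N : ℝ)⁻¹ * (N * B) := by gcongr
    _ = B := by field_simp

end DampedOscillator

theorem uniform_second_moment_bound_general (d : ℕ) (T K B mW D I0 : ℝ) :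
    ∃ C : ℝ, ∀ (N : ℕ), 0 < N → ∀ α : ℝ, α ∈ Set.Icc (0 : ℝ) 1 →
      ∀ WL : EuclideanSpace ℝ (Fin d) → ℝ, ContDiff ℝ 1 WL →
        (∀ z, WL z = WL (-z)) → (∀ z, ‖gradient WL z‖ ≤ B) → (∀ z, -mW ≤ WL z) →
      ∀ (x v : Fin N → ℝ → EuclideanSpace ℝ (Fin d))
        (xd : Fin N → EuclideanSpace ℝ (Fin d))
        (m : ℝ → EuclideanSpace ℝ (Fin d)),
        Continuous m → (∀ t, ‖m t‖ ^ 2 ≤ K) →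
        (∀ i, ∀ t ∈ Set.Icc 0 T, HasDerivAt (x i) (v i t) t) →
        (∀ i, ∀ t ∈ Set.Icc 0 T, HasDerivAt (v i)
          (-(1 - α) • (x i t - xd i) - α • (x i t - m t) - v i t
            + (N : ℝ)⁻¹ • ∑ j, gradient WL (x j t - x i t)) t) →
        (∀ i, ‖xd i‖ ≤ D) →
        ((N : ℝ)⁻¹ * ∑ i, (‖x i 0‖ ^ 2 + ‖v i 0‖ ^ 2) ≤ I0) →
        ∀ t ∈ Set.Icc 0 T, (N : ℝ)⁻¹ * ∑ i, (‖x i t‖ ^ 2 + ‖v i t‖ ^ 2) ≤ C := by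
  set R := max D √K + B
  refine ⟨I0 + R ^ 2 / 2 * T, ?_⟩
  intro N hN α hα WL _ _ hWL _ x v xd m _ hm hx hv hxd hI0 t ht
  set c : Fin N → ℝ → EuclideanSpace ℝ (Fin d) := fun i s ↦
    (1 - α) • xd i + α • m s + (N : ℝ)⁻¹ • ∑ j, gradient WL (x j s - x i s)
  have hv' : ∀ i, ∀ s ∈ Icc 0 T, HasDerivAt (v i) (-x i s - v i s + c i s) s :=
    fun i s hs ↦ (hv i s hs).congr_deriv (by module)
  have hc : ∀ i s, ‖c i s‖ ≤ R := fun i s ↦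
    norm_one_sub_smul_add_smul_add_le hα (hxd i) (Real.le_sqrt_of_sq_le (hm s))
      (norm_inv_natCast_smul_sum_le hN fun j ↦ hWL _)
  calc (N : ℝ)⁻¹ * ∑ i, (‖x i t‖ ^ 2 + ‖v i t‖ ^ 2)
      ≤ (N : ℝ)⁻¹ * ∑ i, (‖x i 0‖ ^ 2 + ‖v i 0‖ ^ 2 + R ^ 2 / 2 * t) := by
        gcongr _ * ∑ i, ?_ with i
        exact norm_sq_add_norm_sq_le_of_damped_oscillator (hx i) (hv' i) (fun s _ ↦ hc i s) ht
    _ = (N : ℝ)⁻¹ * ∑ i, (‖x i 0‖ ^ 2 + ‖v i 0‖ ^ 2) + R ^ 2 / 2 * t := by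
        rw [Finset.sum_add_distrib, Finset.sum_const, Finset.card_univ, Fintype.card_fin,
          nsmul_eq_mul]
        field_simp
    _ ≤ I0 + R ^ 2 / 2 * T := by gcongr; exact ht.2

/-- Uniform-in-`N` second moment bound for the controlled leader particle system. -/
theorem uniform_second_moment_bound (d : ℕ) (T K B mW D I0 : ℝ)
    (hT : 0 ≤ T) (hK : 0 ≤ K) :
    ∃ C : ℝ, ∀ (N : ℕ), 0 < N → ∀ α : ℝ, α ∈ Set.Icc (0 : ℝ) 1 →
      ∀ WL : EuclideanSpace ℝ (Fin d) → ℝ, ContDiff ℝ 1 WL →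
        (∀ z, WL z = WL (-z)) → (∀ z, ‖gradient WL z‖ ≤ B) → (∀ z, -mW ≤ WL z) →
      ∀ (x v : Fin N → ℝ → EuclideanSpace ℝ (Fin d))
        (xd : Fin N → EuclideanSpace ℝ (Fin d))
        (m : ℝ → EuclideanSpace ℝ (Fin d)),
        Continuous m → (∀ t, ‖m t‖ ^ 2 ≤ K) →
        (∀ i, ∀ t ∈ Set.Icc 0 T, HasDerivAt (x i) (v i t) t) →
        (∀ i, ∀ t ∈ Set.Icc 0 T, HasDerivAt (v i)
          (-(1 - α) • (x i t - xd i) - α • (x i t - m t) - v i t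
            + (N : ℝ)⁻¹ • ∑ j, gradient WL (x j t - x i t)) t) →
        (∀ i, ‖xd i‖ ≤ D) →
        ((N : ℝ)⁻¹ * ∑ i, (‖x i 0‖ ^ 2 + ‖v i 0‖ ^ 2) ≤ I0) →
        ∀ t ∈ Set.Icc 0 T, (N : ℝ)⁻¹ * ∑ i, (‖x i t‖ ^ 2 + ‖v i t‖ ^ 2) ≤ C :=
  uniform_second_moment_bound_general d T K B mW D I0
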